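/- arXiv:2506.22072 — 3 statements merged into one kernel-verified Lean document; each statement's English description precedes it below -/
import Mathlib

section
/- Let C be a symmetric monoidal category, (A, η, μ) a monoid object in C, and ε : A ⟶ 𝟙 a morphism. Then the following are equivalent: (i) there exists a morphism coev : 𝟙 ⟶ A ⊗ A such that coev together with ev := μ ≫ ε satisfies the two zigzag (triangle) identities, i.e. (coev ▷ A) ≫ α_{A,A,A} ≫ (A ◁ ev) equals the identity of A (up to unitors) and (A ◁ coev) ≫ α⁻¹ ≫ (ev ▷ A) equals the identity of A (up to unitors), so that this data exhibits A as dual to itself; (ii) there exists a morphism δ : A ⟶ A ⊗ A such that (ε, δ) is Frobenius data on A, i.e. δ is a map of A-bimodules (μ ≫ δ = (A ◁ δ) ≫ α⁻¹_{A,A,A} ≫ (μ ▷ A) and μ ≫ δ = (δ ▷ A) ≫ α_{A,A,A} ≫ (A ◁ μ)) and the counitality identities hold: δ ≫ (ε ▷ A) ≫ λ_A = id_A and δ ≫ (A ◁ ε) ≫ ρ_A = id_A. -/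
open CategoryTheory MonoidalCategory

section Aux

variable {C : Type*} [Category C] [MonoidalCategory C]
  (A : C) (μ : A ⊗ A ⟶ A) (ε : A ⟶ 𝟙_ C) (c : 𝟙_ C ⟶ A ⊗ A)

/-- The transpose `Ψ(Φ(δ)) = δ`: recovering `δ` from its mate, using the second zigzag. -/
private lemma frob_aux_mate
    (z2 : (ρ_ A).inv ≫ (A ◁ c) ≫ (α_ A A A).inv ≫ ((μ ≫ ε) ▷ A) ≫ (λ_ A).hom = 𝟙 A)
    (δ : A ⟶ A ⊗ A) :
    (ρ_ A).inv ≫ (A ◁ c) ≫ (α_ A A A).inv ≫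
      (((δ ▷ A) ≫ (α_ A A A).hom ≫ (A ◁ (μ ≫ ε)) ≫ (ρ_ A).hom) ▷ A) = δ := by
  simp only [comp_whiskerRight, MonoidalCategory.whiskerLeft_comp, Category.assoc]
  rw [← associator_inv_naturality_left_assoc, whisker_exchange_assoc,
    ← rightUnitor_inv_naturality_assoc]
  have h : (ρ_ (A ⊗ A)).inv ≫ ((A ⊗ A) ◁ c) ≫ (α_ (A ⊗ A) A A).inv ≫ ((α_ A A A).hom ▷ A) ≫
      ((A ◁ μ) ▷ A) ≫ ((A ◁ ε) ▷ A) ≫ ((ρ_ A).hom ▷ A) = 𝟙 (A ⊗ A) := by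
    have := congrArg (fun f => A ◁ f) z2
    simp only [MonoidalCategory.whiskerLeft_comp, comp_whiskerRight, Category.assoc,
      MonoidalCategory.whiskerLeft_id] at this
    rw [← this]
    coherence
  rw [h, Category.comp_id]

/-- The mate of the second comultiplication candidate is `μ`, using the first zigzag. -/
private lemma frob_aux_mate_mul
    (mul_assoc : (μ ▷ A) ≫ μ = (α_ A A A).hom ≫ (A ◁ μ) ≫ μ)
    (z1 : (λ_ A).inv ≫ (c ▷ A) ≫ (α_ A A A).hom ≫ (A ◁ (μ ≫ ε)) ≫ (ρ_ A).hom = 𝟙 A) :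
    ((((λ_ A).inv ≫ (c ▷ A) ≫ (α_ A A A).hom ≫ (A ◁ μ)) ▷ A) ≫ (α_ A A A).hom ≫
      (A ◁ (μ ≫ ε)) ≫ (ρ_ A).hom) = μ := by
  have hz : μ ≫ (λ_ A).inv ≫ (c ▷ A) ≫ (α_ A A A).hom ≫ (A ◁ μ) ≫ (A ◁ ε) ≫ (ρ_ A).hom = μ := by
    conv_rhs => rw [← Category.comp_id μ, ← z1]
    simp
  calc (((λ_ A).inv ≫ (c ▷ A) ≫ (α_ A A A).hom ≫ (A ◁ μ)) ▷ A) ≫ (α_ A A A).hom ≫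
      (A ◁ (μ ≫ ε)) ≫ (ρ_ A).hom
      = ((λ_ A).inv ▷ A) ≫ ((c ▷ A) ▷ A) ≫ ((α_ A A A).hom ▷ A) ≫ (α_ A (A ⊗ A) A).hom ≫
          (A ◁ (μ ▷ A)) ≫ (A ◁ μ) ≫ (A ◁ ε) ≫ (ρ_ A).hom := by
        simp only [comp_whiskerRight, MonoidalCategory.whiskerLeft_comp, Category.assoc]
        rw [associator_naturality_middle_assoc]
    _ = ((λ_ A).inv ▷ A) ≫ ((c ▷ A) ▷ A) ≫ ((α_ A A A).hom ▷ A) ≫ (α_ A (A ⊗ A) A).hom ≫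
          (A ◁ (α_ A A A).hom) ≫ (A ◁ (A ◁ μ)) ≫ (A ◁ μ) ≫ (A ◁ ε) ≫ (ρ_ A).hom := by
        slice_lhs 5 6 => rw [← MonoidalCategory.whiskerLeft_comp, mul_assoc]
        simp
    _ = μ ≫ (λ_ A).inv ≫ (c ▷ A) ≫ (α_ A A A).hom ≫ (A ◁ μ) ≫ (A ◁ ε) ≫ (ρ_ A).hom := by
        rw [leftUnitor_inv_naturality_assoc, whisker_exchange_assoc,
          associator_naturality_right_assoc]
        coherence
    _ = μ := hz

/-- The first comultiplication candidate is a map of left `A`-modules. -/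
private lemma frob_aux_left_module
    (mul_assoc : (μ ▷ A) ≫ μ = (α_ A A A).hom ≫ (A ◁ μ) ≫ μ) :
    μ ≫ ((ρ_ A).inv ≫ (A ◁ c) ≫ (α_ A A A).inv ≫ (μ ▷ A)) =
    (A ◁ ((ρ_ A).inv ≫ (A ◁ c) ≫ (α_ A A A).inv ≫ (μ ▷ A))) ≫ (α_ A A A).inv ≫ (μ ▷ A) := by
  calc μ ≫ (ρ_ A).inv ≫ (A ◁ c) ≫ (α_ A A A).inv ≫ (μ ▷ A)
      = (ρ_ (A ⊗ A)).inv ≫ ((A ⊗ A) ◁ c) ≫ (α_ (A ⊗ A) A A).inv ≫ ((μ ▷ A) ▷ A) ≫ (μ ▷ A) := by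
        rw [rightUnitor_inv_naturality_assoc, ← whisker_exchange_assoc,
          associator_inv_naturality_left_assoc]
    _ = (ρ_ (A ⊗ A)).inv ≫ ((A ⊗ A) ◁ c) ≫ (α_ (A ⊗ A) A A).inv ≫ ((α_ A A A).hom ▷ A) ≫
          ((A ◁ μ) ▷ A) ≫ (μ ▷ A) := by
        slice_lhs 4 5 => rw [← comp_whiskerRight, mul_assoc]
        simp
    _ = (A ◁ ((ρ_ A).inv ≫ (A ◁ c) ≫ (α_ A A A).inv ≫ (μ ▷ A))) ≫ (α_ A A A).inv ≫ (μ ▷ A) := by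
        simp only [MonoidalCategory.whiskerLeft_comp, Category.assoc]
        rw [associator_inv_naturality_middle_assoc]
        coherence

/-- The second comultiplication candidate is a map of right `A`-modules. -/
private lemma frob_aux_right_module
    (mul_assoc : (μ ▷ A) ≫ μ = (α_ A A A).hom ≫ (A ◁ μ) ≫ μ) :
    μ ≫ ((λ_ A).inv ≫ (c ▷ A) ≫ (α_ A A A).hom ≫ (A ◁ μ)) =
    (((λ_ A).inv ≫ (c ▷ A) ≫ (α_ A A A).hom ≫ (A ◁ μ)) ▷ A) ≫ (α_ A A A).hom ≫ (A ◁ μ) := by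
  calc μ ≫ (λ_ A).inv ≫ (c ▷ A) ≫ (α_ A A A).hom ≫ (A ◁ μ)
      = (λ_ (A ⊗ A)).inv ≫ (c ▷ (A ⊗ A)) ≫ (α_ A A (A ⊗ A)).hom ≫ (A ◁ (A ◁ μ)) ≫ (A ◁ μ) := by
        rw [leftUnitor_inv_naturality_assoc, whisker_exchange_assoc,
          associator_naturality_right_assoc]
    _ = (λ_ (A ⊗ A)).inv ≫ (c ▷ (A ⊗ A)) ≫ (α_ A A (A ⊗ A)).hom ≫ (A ◁ (α_ A A A).inv) ≫
          (A ◁ (μ ▷ A)) ≫ (A ◁ μ) := by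
        slice_lhs 4 5 => rw [← MonoidalCategory.whiskerLeft_comp]
        rw [show (A ◁ μ) ≫ μ = (α_ A A A).inv ≫ (μ ▷ A) ≫ μ by
          rw [mul_assoc]; simp]
        simp
    _ = (((λ_ A).inv ≫ (c ▷ A) ≫ (α_ A A A).hom ≫ (A ◁ μ)) ▷ A) ≫ (α_ A A A).hom ≫ (A ◁ μ) := by
        simp only [comp_whiskerRight, Category.assoc]
        rw [associator_naturality_middle_assoc]
        coherence

end Aux

/-- For a monoid object `(A, η, μ)` in a symmetric monoidal category and a morphism
`ε : A ⟶ 𝟙`, the following are equivalent: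
(i) there is a coevaluation `coev : 𝟙 ⟶ A ⊗ A` which together with `ev := μ ≫ ε`
satisfies the zigzag identities, exhibiting `A` as dual to itself;
(ii) there is a morphism `δ : A ⟶ A ⊗ A` which is a map of `A`-bimodules and satisfies
the counitality identities, i.e. `(ε, δ)` is Frobenius data on `A`. -/
theorem frobenius_iff_self_dual
    {C : Type*} [Category C] [MonoidalCategory C] [SymmetricCategory C]
    (A : C) (η : 𝟙_ C ⟶ A) (μ : A ⊗ A ⟶ A)
    (one_mul : (η ▷ A) ≫ μ = (λ_ A).hom)
    (mul_one : (A ◁ η) ≫ μ = (ρ_ A).hom)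
    (mul_assoc : (μ ▷ A) ≫ μ = (α_ A A A).hom ≫ (A ◁ μ) ≫ μ)
    (ε : A ⟶ 𝟙_ C) :
    (∃ coev : 𝟙_ C ⟶ A ⊗ A,
      (λ_ A).inv ≫ (coev ▷ A) ≫ (α_ A A A).hom ≫ (A ◁ (μ ≫ ε)) ≫ (ρ_ A).hom = 𝟙 A ∧
      (ρ_ A).inv ≫ (A ◁ coev) ≫ (α_ A A A).inv ≫ ((μ ≫ ε) ▷ A) ≫ (λ_ A).hom = 𝟙 A) ↔
    (∃ δ : A ⟶ A ⊗ A,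
      μ ≫ δ = (A ◁ δ) ≫ (α_ A A A).inv ≫ (μ ▷ A) ∧
      μ ≫ δ = (δ ▷ A) ≫ (α_ A A A).hom ≫ (A ◁ μ) ∧
      δ ≫ (ε ▷ A) ≫ (λ_ A).hom = 𝟙 A ∧
      δ ≫ (A ◁ ε) ≫ (ρ_ A).hom = 𝟙 A) := by
  constructor
  · rintro ⟨c, z1, z2⟩
    refine ⟨(ρ_ A).inv ≫ (A ◁ c) ≫ (α_ A A A).inv ≫ (μ ▷ A), ?_, ?_, ?_, ?_⟩
    case _ =>
      exact frob_aux_left_module A μ c mul_assoc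
    case _ =>
      have key : (ρ_ A).inv ≫ (A ◁ c) ≫ (α_ A A A).inv ≫ (μ ▷ A) =
          (λ_ A).inv ≫ (c ▷ A) ≫ (α_ A A A).hom ≫ (A ◁ μ) := by
        conv_rhs => rw [← frob_aux_mate A μ ε c z2
          ((λ_ A).inv ≫ (c ▷ A) ≫ (α_ A A A).hom ≫ (A ◁ μ))]
        rw [frob_aux_mate_mul A μ ε c mul_assoc z1]
      rw [key]
      exact frob_aux_right_module A μ c mul_assoc
    case _ =>
      simpa only [comp_whiskerRight, Category.assoc] using z2
    case _ =>
      have key : (ρ_ A).inv ≫ (A ◁ c) ≫ (α_ A A A).inv ≫ (μ ▷ A) =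
          (λ_ A).inv ≫ (c ▷ A) ≫ (α_ A A A).hom ≫ (A ◁ μ) := by
        conv_rhs => rw [← frob_aux_mate A μ ε c z2
          ((λ_ A).inv ≫ (c ▷ A) ≫ (α_ A A A).hom ≫ (A ◁ μ))]
        rw [frob_aux_mate_mul A μ ε c mul_assoc z1]
      rw [key]
      simpa only [MonoidalCategory.whiskerLeft_comp, Category.assoc] using z1
  · rintro ⟨δ, hl, hr, c1, c2⟩
    refine ⟨η ≫ δ, ?_, ?_⟩
    · simp only [comp_whiskerRight, MonoidalCategory.whiskerLeft_comp, Category.assoc]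
      slice_lhs 3 5 => rw [← hr]
      slice_lhs 2 3 => rw [one_mul]
      simp [c2]
    · simp only [comp_whiskerRight, MonoidalCategory.whiskerLeft_comp, Category.assoc]
      slice_lhs 3 5 => rw [← hl]
      slice_lhs 2 3 => rw [mul_one]
      simp [c1]
end

section
/- Let C be a symmetric monoidal category and let (A, η_A, μ_A) and (B, η_B, μ_B) be monoid objects equipped with Frobenius data (ε_A, δ_A) and (ε_B, δ_B) respectively. Let f : A ⟶ B be a morphism of monoids (η_A ≫ f = η_B and μ_A ≫ f = (f ⊗ f) ≫ μ_B). Equip A with the self-duality datum ev_A := μ_A ≫ ε_A, coev_A := η_A ≫ δ_A, and B with ev_B := μ_B ≫ ε_B, coev_B := η_B ≫ δ_B, and let f^t : B ⟶ A denote the transpose of f with respect to these self-dualities, i.e. the composite B ≅ B ⊗ 𝟙 ⟶ B ⊗ (A ⊗ A) ⟶ B ⊗ (B ⊗ A) ≅ (B ⊗ B) ⊗ A ⟶ 𝟙 ⊗ A ≅ A built from coev_A, f, and ev_B. Then f^t is a morphism of right A-modules, where B carries the right A-action (B ◁ f) ≫ μ_B and A carries the right action μ_A; explicitly: (B ◁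 f) ≫ μ_B ≫ f^t = (f^t ▷ A) ≫ μ_A. -/
open CategoryTheory MonoidalCategory

/-- The transpose `Yv ⟶ Xv` of a morphism `f : X ⟶ Y` with respect to duality data,
built from the coevaluation of `X`, `f`, and the evaluation of `Y`. -/
def transposeHom {C : Type*} [Category C] [MonoidalCategory C]
    {X Y Xv Yv : C} (f : X ⟶ Y) (evY : Yv ⊗ Y ⟶ 𝟙_ C) (coevX : 𝟙_ C ⟶ X ⊗ Xv) :
    Yv ⟶ Xv :=
  (ρ_ Yv).inv ≫ (Yv ◁ coevX) ≫ (Yv ◁ (f ▷ Xv)) ≫ (α_ Yv Y Xv).inv ≫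
    (evY ▷ Xv) ≫ (λ_ Xv).hom

/-!
Write `coev = η ≫ δ = Σ a₁ ⊗ a₂`. Then `fᵗ b = Σ ε(b · f a₁) a₂`, so `fᵗ` only sees `B` through the
pairing `b ⊗ a ↦ ε(b · f a)`, which is balanced because `f` is multiplicative. The Frobenius
condition says that `Σ a a₁ ⊗ a₂ = δ a = Σ a₁ ⊗ a₂ a`, i.e. `A` can be moved across the
coevaluation from the left factor to the right one, and this turns `fᵗ (b · f a)` into `fᵗ b · a`.
-/

namespace CategoryTheory.MonoidalCategory

variable {C : Type*} [Category C] [MonoidalCategory C]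

lemma transposeHom_eq_transposeHom_id {X Y Xv Yv : C} (f : X ⟶ Y) (evY : Yv ⊗ Y ⟶ 𝟙_ C)
    (coevX : 𝟙_ C ⟶ X ⊗ Xv) :
    transposeHom f evY coevX = transposeHom (𝟙 X) ((Yv ◁ f) ≫ evY) coevX := by
  unfold transposeHom
  monoidal

section Frobenius

variable {A : C} {η : 𝟙_ C ⟶ A} {μ : A ⊗ A ⟶ A} {δ : A ⟶ A ⊗ A}

lemma whiskerLeft_coev_comp_mul (mul_one : (A ◁ η) ≫ μ = (ρ_ A).hom)
    (bimod : μ ≫ δ = (A ◁ δ) ≫ (α_ A A A).inv ≫ (μ ▷ A)) :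
    (ρ_ A).inv ≫ (A ◁ (η ≫ δ)) ≫ (α_ A A A).inv ≫ (μ ▷ A) = δ := by
  rw [MonoidalCategory.whiskerLeft_comp]
  slice_lhs 3 5 => rw [← bimod]
  slice_lhs 2 3 => rw [mul_one]
  simp

lemma whiskerRight_coev_comp_mul (one_mul : (η ▷ A) ≫ μ = (λ_ A).hom)
    (bimod : μ ≫ δ = (δ ▷ A) ≫ (α_ A A A).hom ≫ (A ◁ μ)) :
    (λ_ A).inv ≫ ((η ≫ δ) ▷ A) ≫ (α_ A A A).hom ≫ (A ◁ μ) = δ := by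
  rw [MonoidalCategory.comp_whiskerRight]
  slice_lhs 3 5 => rw [← bimod]
  slice_lhs 2 3 => rw [one_mul]
  simp

end Frobenius

lemma transposeHom_id_isRightModuleHom {M A : C} {μ : A ⊗ A ⟶ A} {coev : 𝟙_ C ⟶ A ⊗ A}
    (act : M ⊗ A ⟶ M) (pairing : M ⊗ A ⟶ 𝟙_ C)
    (pairing_balanced : (act ▷ A) ≫ pairing = (α_ M A A).hom ≫ (M ◁ μ) ≫ pairing)
    (coev_balanced : (ρ_ A).inv ≫ (A ◁ coev) ≫ (α_ A A A).inv ≫ (μ ▷ A) =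
      (λ_ A).inv ≫ (coev ▷ A) ≫ (α_ A A A).hom ≫ (A ◁ μ)) :
    act ≫ transposeHom (𝟙 A) pairing coev = (transposeHom (𝟙 A) pairing coev ▷ A) ≫ μ := by
  unfold transposeHom
  calc act ≫ (ρ_ M).inv ≫ (M ◁ coev) ≫ (M ◁ (𝟙 A ▷ A)) ≫ (α_ M A A).inv ≫ (pairing ▷ A) ≫
        (λ_ A).hom
      = (ρ_ (M ⊗ A)).inv ≫ ((M ⊗ A) ◁ coev) ≫ (act ▷ (A ⊗ A)) ≫ (α_ M A A).inv ≫
          (pairing ▷ A) ≫ (λ_ A).hom := by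
        rw [whisker_exchange_assoc]; monoidal
    _ = (ρ_ (M ⊗ A)).inv ≫ ((M ⊗ A) ◁ coev) ≫ (α_ (M ⊗ A) A A).inv ≫
          (((act ▷ A) ≫ pairing) ▷ A) ≫ (λ_ A).hom := by
        monoidal
    _ = (M ◁ ((ρ_ A).inv ≫ (A ◁ coev) ≫ (α_ A A A).inv ≫ (μ ▷ A))) ≫ (α_ M A A).inv ≫
          (pairing ▷ A) ≫ (λ_ A).hom := by
        rw [pairing_balanced]; monoidal
    _ = (M ◁ ((λ_ A).inv ≫ (coev ▷ A) ≫ (α_ A A A).hom)) ≫ (α_ M A (A ⊗ A)).inv ≫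
          ((M ⊗ A) ◁ μ) ≫ (pairing ▷ A) ≫ (λ_ A).hom := by
        rw [coev_balanced]; monoidal
    _ = _ := by
        rw [whisker_exchange_assoc]; monoidal

lemma restrictScalars_action_assoc {A B : C} {μA : A ⊗ A ⟶ A} {μB : B ⊗ B ⟶ B} (f : A ⟶ B)
    (mul_assocB : (μB ▷ B) ≫ μB = (α_ B B B).hom ≫ (B ◁ μB) ≫ μB)
    (f_mul : μA ≫ f = (f ⊗ₘ f) ≫ μB) :
    (((B ◁ f) ≫ μB) ▷ A) ≫ (B ◁ f) ≫ μB = (α_ B A A).hom ≫ (B ◁ μA) ≫ (B ◁ f) ≫ μB := by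
  calc (((B ◁ f) ≫ μB) ▷ A) ≫ (B ◁ f) ≫ μB
      = ((B ◁ f) ▷ A) ≫ ((B ⊗ B) ◁ f) ≫ (μB ▷ B) ≫ μB := by
        rw [whisker_exchange_assoc]; monoidal
    _ = (α_ B A A).hom ≫ (B ◁ ((f ⊗ₘ f) ≫ μB)) ≫ μB := by
        rw [mul_assocB, tensorHom_def]; monoidal
    _ = (α_ B A A).hom ≫ (B ◁ μA) ≫ (B ◁ f) ≫ μB := by
        rw [← f_mul, MonoidalCategory.whiskerLeft_comp_assoc]

end CategoryTheory.MonoidalCategory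

theorem transpose_of_frobenius_map_is_right_module_map_general
    {C : Type*} [Category C] [MonoidalCategory C]
    (A B : C)
    (ηA : 𝟙_ C ⟶ A) (μA : A ⊗ A ⟶ A)
    (one_mulA : (ηA ▷ A) ≫ μA = (λ_ A).hom)
    (mul_oneA : (A ◁ ηA) ≫ μA = (ρ_ A).hom)
    (μB : B ⊗ B ⟶ B)
    (mul_assocB : (μB ▷ B) ≫ μB = (α_ B B B).hom ≫ (B ◁ μB) ≫ μB)
    (δA : A ⟶ A ⊗ A)
    (bimodA₁ : μA ≫ δA = (A ◁ δA) ≫ (α_ A A A).inv ≫ (μA ▷ A))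
    (bimodA₂ : μA ≫ δA = (δA ▷ A) ≫ (α_ A A A).hom ≫ (A ◁ μA))
    (εB : B ⟶ 𝟙_ C)
    (f : A ⟶ B)
    (f_mul : μA ≫ f = (f ⊗ₘ f) ≫ μB) :
    (B ◁ f) ≫ μB ≫ transposeHom f (μB ≫ εB) (ηA ≫ δA) =
      (transposeHom f (μB ≫ εB) (ηA ≫ δA) ▷ A) ≫ μA := by
  have pairing_balanced :
      (((B ◁ f) ≫ μB) ▷ A) ≫ (B ◁ f) ≫ μB ≫ εB = (α_ B A A).hom ≫ (B ◁ μA) ≫ (B ◁ f) ≫ μB ≫ εB := by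
    simpa only [Category.assoc] using restrictScalars_action_assoc f mul_assocB f_mul =≫ εB
  have coev_balanced := (whiskerLeft_coev_comp_mul mul_oneA bimodA₁).trans
    (whiskerRight_coev_comp_mul one_mulA bimodA₂).symm
  rw [transposeHom_eq_transposeHom_id]
  simpa only [Category.assoc] using
    transposeHom_id_isRightModuleHom _ _ pairing_balanced coev_balanced

/-- If `f : A ⟶ B` is a morphism of Frobenius monoids in a symmetric monoidal
category, then its transpose `f^t : B ⟶ A` (with respect to the self-dualities
`ev := μ ≫ ε`, `coev := η ≫ δ`) is a morphism of right `A`-modules, where `B`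
carries the right `A`-action `(B ◁ f) ≫ μ_B` and `A` the regular right action `μ_A`. -/
theorem transpose_of_frobenius_map_is_right_module_map
    {C : Type*} [Category C] [MonoidalCategory C] [SymmetricCategory C]
    (A B : C)
    (ηA : 𝟙_ C ⟶ A) (μA : A ⊗ A ⟶ A)
    (one_mulA : (ηA ▷ A) ≫ μA = (λ_ A).hom)
    (mul_oneA : (A ◁ ηA) ≫ μA = (ρ_ A).hom)
    (mul_assocA : (μA ▷ A) ≫ μA = (α_ A A A).hom ≫ (A ◁ μA) ≫ μA)
    (ηB : 𝟙_ C ⟶ B) (μB : B ⊗ B ⟶ B)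
    (one_mulB : (ηB ▷ B) ≫ μB = (λ_ B).hom)
    (mul_oneB : (B ◁ ηB) ≫ μB = (ρ_ B).hom)
    (mul_assocB : (μB ▷ B) ≫ μB = (α_ B B B).hom ≫ (B ◁ μB) ≫ μB)
    (εA : A ⟶ 𝟙_ C) (δA : A ⟶ A ⊗ A)
    (bimodA₁ : μA ≫ δA = (A ◁ δA) ≫ (α_ A A A).inv ≫ (μA ▷ A))
    (bimodA₂ : μA ≫ δA = (δA ▷ A) ≫ (α_ A A A).hom ≫ (A ◁ μA))
    (counitA₁ : δA ≫ (εA ▷ A) ≫ (λ_ A).hom = 𝟙 A)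
    (counitA₂ : δA ≫ (A ◁ εA) ≫ (ρ_ A).hom = 𝟙 A)
    (εB : B ⟶ 𝟙_ C) (δB : B ⟶ B ⊗ B)
    (bimodB₁ : μB ≫ δB = (B ◁ δB) ≫ (α_ B B B).inv ≫ (μB ▷ B))
    (bimodB₂ : μB ≫ δB = (δB ▷ B) ≫ (α_ B B B).hom ≫ (B ◁ μB))
    (counitB₁ : δB ≫ (εB ▷ B) ≫ (λ_ B).hom = 𝟙 B)
    (counitB₂ : δB ≫ (B ◁ εB) ≫ (ρ_ B).hom = 𝟙 B)
    (f : A ⟶ B)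
    (f_one : ηA ≫ f = ηB)
    (f_mul : μA ≫ f = (f ⊗ₘ f) ≫ μB) :
    (B ◁ f) ≫ μB ≫ transposeHom f (μB ≫ εB) (ηA ≫ δA) =
      (transposeHom f (μB ≫ εB) (ηA ≫ δA) ▷ A) ≫ μA :=
  transpose_of_frobenius_map_is_right_module_map_general A B ηA μA one_mulA mul_oneA μB mul_assocB
    δA bimodA₁ bimodA₂ εB f f_mul
end

section
/- Let C be a symmetric monoidal category and (A, η, μ) a monoid object equipped with Frobenius data (ε, δ), i.e. δ : A ⟶ A ⊗ A is a map of A-bimodules and the counitality identities δ ≫ (ε ▷ A) ≫ λ_A = id_A and δ ≫ (A ◁ ε) ≫ ρ_A = id_A hold. Then δ is coassociative: δ ≫ (δ ▷ A) ≫ α_{A,A,A} = δ ≫ (A ◁ δ). Consequently (A, ε, δ) is a comonoid object of C with counit ε and comultiplication δ. -/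
open CategoryTheory MonoidalCategory

private lemma frobenius_interchange
    {C : Type*} [Category C] [MonoidalCategory C]
    (A : C) (η : 𝟙_ C ⟶ A) (μ : A ⊗ A ⟶ A) (δ : A ⟶ A ⊗ A) :
    A ◁ η ≫ A ◁ δ ≫ (α_ A A A).inv ≫ δ ▷ A ▷ A ≫ (α_ A A A).hom ▷ A ≫ (A ◁ μ) ▷ A ≫ (α_ A A A).hom
      = A ◁ η ≫ δ ▷ A ≫ (α_ A A A).hom ≫ A ◁ (A ◁ δ) ≫ A ◁ (α_ A A A).inv ≫ A ◁ (μ ▷ A) := by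
  rw [whiskerRight_tensor_symm_assoc δ A A, tensor_whiskerLeft_symm A A δ]
  simp only [Iso.inv_hom_id_assoc, Category.assoc]
  slice_lhs 2 3 => rw [whisker_exchange]
  simp only [Category.assoc]
  congr 2
  coherence

/-- If `(ε, δ)` is Frobenius data on a monoid object `(A, η, μ)` in a symmetric
monoidal category, then `δ` is coassociative, so that `(A, ε, δ)` is a comonoid
object with counit `ε` and comultiplication `δ`. -/
theorem frobenius_comul_coassoc
    {C : Type*} [Category C] [MonoidalCategory C] [SymmetricCategory C]
    (A : C) (η : 𝟙_ C ⟶ A) (μ : A ⊗ A ⟶ A)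
    (one_mul : (η ▷ A) ≫ μ = (λ_ A).hom)
    (mul_one : (A ◁ η) ≫ μ = (ρ_ A).hom)
    (mul_assoc : (μ ▷ A) ≫ μ = (α_ A A A).hom ≫ (A ◁ μ) ≫ μ)
    (ε : A ⟶ 𝟙_ C) (δ : A ⟶ A ⊗ A)
    (bimod₁ : μ ≫ δ = (A ◁ δ) ≫ (α_ A A A).inv ≫ (μ ▷ A))
    (bimod₂ : μ ≫ δ = (δ ▷ A) ≫ (α_ A A A).hom ≫ (A ◁ μ))
    (counit₁ : δ ≫ (ε ▷ A) ≫ (λ_ A).hom = 𝟙 A)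
    (counit₂ : δ ≫ (A ◁ ε) ≫ (ρ_ A).hom = 𝟙 A) :
    δ ≫ (δ ▷ A) ≫ (α_ A A A).hom = δ ≫ (A ◁ δ) ∧
    δ ≫ (ε ▷ A) ≫ (λ_ A).hom = 𝟙 A ∧
    δ ≫ (A ◁ ε) ≫ (ρ_ A).hom = 𝟙 A := by
  refine ⟨?_, counit₁, counit₂⟩
  have e : (ρ_ A).inv ≫ (A ◁ η) ≫ μ = 𝟙 A := by rw [mul_one]; simp
  have L : δ ≫ (δ ▷ A) ≫ (α_ A A A).hom =
      (ρ_ A).inv ≫ A ◁ η ≫ A ◁ δ ≫ (α_ A A A).inv ≫ δ ▷ A ▷ A ≫ (α_ A A A).hom ▷ A ≫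
        (A ◁ μ) ▷ A ≫ (α_ A A A).hom := by
    symm
    slice_lhs 5 7 => rw [← comp_whiskerRight, ← comp_whiskerRight, ← bimod₂]
    simp only [comp_whiskerRight, Category.assoc]
    slice_lhs 3 5 => rw [← bimod₁]
    simp only [Category.assoc]
    slice_lhs 1 3 => rw [e]
    simp
  have R : δ ≫ (A ◁ δ) =
      (ρ_ A).inv ≫ A ◁ η ≫ δ ▷ A ≫ (α_ A A A).hom ≫ A ◁ (A ◁ δ) ≫ A ◁ (α_ A A A).inv ≫
        A ◁ (μ ▷ A) := by
    symm
    slice_lhs 5 7 => rw [← MonoidalCategory.whiskerLeft_comp, ← MonoidalCategory.whiskerLeft_comp,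
      ← bimod₁]
    simp only [MonoidalCategory.whiskerLeft_comp, Category.assoc]
    slice_lhs 3 5 => rw [← bimod₂]
    simp only [Category.assoc]
    slice_lhs 1 3 => rw [e]
    simp
  rw [L, R]
  have := frobenius_interchange A η μ δ
  rw [this]
end
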